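/- arXiv:2504.16165 — 2 statements merged into one kernel-verified Lean document; each statement's English description precedes it below -/
import Mathlib

section
/- Let X_j, Z_j (1 ≤ j ≤ k) be invertible matrices satisfying Z_j X_j = Ω X_j Z_j with Ω a primitive q-th root of unity, and all other pairs commuting ([X_i, X_j] = [Z_i, Z_j] = 0, [X_i, Z_j] = 0 for i ≠ j). Then any representation of this algebra has dimension at least q^k. -/
/-!
Over an algebraically closed field, `Z 0` has an eigenvalue `μ`, nonzero since `Z 0` is
invertible. The relation `Z 0 * X 0 = Ω • (X 0 * Z 0)` makes `X 0 ^ j` map the `μ`-eigenspace `E`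
of `Z 0` injectively into its `Ω ^ j * μ`-eigenspace; for `j < q` these eigenvalues are distinct,
so `q * dim E ≤ d`. The remaining generators commute with `Z 0`, hence preserve `E` and satisfy
the same relations on it, so by induction `q ^ (k - 1) ≤ dim E`.
-/

open Module Module.End Function

section

variable {K V : Type*} [Field K] [AddCommGroup V] [Module K V]

theorem iSupIndep.sum_finrank_le_finrank [FiniteDimensional K V] {ι : Type*} [Fintype ι]
    {p : ι → Submodule K V} (hp : iSupIndep p) : ∑ i, finrank K (p i) ≤ finrank K V := by
  classical
  rw [← Module.finrank_directSum]
  exact LinearMap.finrank_le_finrank_of_injective hp.dfinsupp_lsum_injective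

theorem LinearMap.injective_restrict_of_injective {f : End K V} {p p' : Submodule K V}
    (hf : Set.MapsTo f p p') (hinj : Injective f) : Injective (f.restrict hf) :=
  (LinearMap.injective_restrict_iff hf).mpr (LinearMap.ker_eq_bot.mpr hinj ▸ disjoint_bot_right)

theorem mapsTo_eigenspace_mul_of_mul_eq_smul_mul {X Z : End K V} {Ω : K}
    (hrel : Z * X = Ω • (X * Z)) (μ : K) :
    Set.MapsTo X (Z.eigenspace μ) (Z.eigenspace (Ω * μ)) := by
  intro v hv
  rw [SetLike.mem_coe, mem_eigenspace_iff] at hv ⊢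
  rw [← mul_apply, hrel, LinearMap.smul_apply, mul_apply, hv, map_smul, smul_smul]

theorem mapsTo_eigenspace_pow_mul_of_mul_eq_smul_mul {X Z : End K V} {Ω : K}
    (hrel : Z * X = Ω • (X * Z)) (μ : K) (j : ℕ) :
    Set.MapsTo (X ^ j) (Z.eigenspace μ) (Z.eigenspace (Ω ^ j * μ)) := by
  intro v hv
  induction j with
  | zero => simpa using hv
  | succ j ih =>
    rw [pow_succ' X, mul_apply, pow_succ' Ω, mul_assoc]
    exact mapsTo_eigenspace_mul_of_mul_eq_smul_mul hrel _ ih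

theorem mul_finrank_eigenspace_le_finrank [FiniteDimensional K V] {X Z : End K V} {Ω : K}
    {q : ℕ} (hΩ : IsPrimitiveRoot Ω q) (hX : Injective X) (hrel : Z * X = Ω • (X * Z))
    {μ : K} (hμ : μ ≠ 0) : q * finrank K (Z.eigenspace μ) ≤ finrank K V := by
  have hshift : Injective fun j : Fin q => Ω ^ (j : ℕ) * μ := fun i j h =>
    Fin.ext (hΩ.pow_inj i.isLt j.isLt (mul_right_cancel₀ hμ h))
  calc q * finrank K (Z.eigenspace μ)
      = ∑ _j : Fin q, finrank K (Z.eigenspace μ) := by simp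
    _ ≤ ∑ j : Fin q, finrank K (Z.eigenspace (Ω ^ (j : ℕ) * μ)) := by
      gcongr with j
      have hXj : Injective ⇑(X ^ (j : ℕ)) := by rw [coe_pow]; exact hX.iterate j
      exact LinearMap.finrank_le_finrank_of_injective
        (LinearMap.injective_restrict_of_injective
          (mapsTo_eigenspace_pow_mul_of_mul_eq_smul_mul hrel μ j) hXj)
    _ ≤ finrank K V := (Z.eigenspaces_iSupIndep.comp hshift).sum_finrank_le_finrank

end

theorem pow_le_finrank_of_weyl_relations {K : Type*} [Field K] [IsAlgClosed K] {q : ℕ} {Ω : K}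
    (hΩ : IsPrimitiveRoot Ω q) (k : ℕ) (V : Type*) [AddCommGroup V] [Module K V]
    [FiniteDimensional K V] [Nontrivial V] (X Z : Fin k → End K V)
    (hX : ∀ j, Injective (X j)) (hZ : ∀ j, Injective (Z j))
    (hrel : ∀ j, Z j * X j = Ω • (X j * Z j))
    (hZZ : ∀ i j, Commute (Z i) (Z j))
    (hXZ : ∀ i j, i ≠ j → Commute (X i) (Z j)) :
    q ^ k ≤ finrank K V := by
  induction k generalizing V with
  | zero => rw [pow_zero]; exact Module.finrank_pos
  | succ k ih =>
    obtain ⟨μ, hμ⟩ := (Z 0).exists_eigenvalue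
    have hμ0 : μ ≠ 0 := by
      rintro rfl
      obtain ⟨v, hv⟩ := hμ.exists_hasEigenvector
      exact hv.2 (hZ 0 (by rw [hv.apply_eq_smul, zero_smul, map_zero]))
    let E := (Z 0).eigenspace μ
    have : Nontrivial E := Submodule.nontrivial_iff_ne_bot.mpr hμ
    have hXE (j : Fin k) : Set.MapsTo (X j.succ) E E :=
      mapsTo_genEigenspace_of_comm (hXZ j.succ 0 j.succ_ne_zero).symm μ 1
    have hZE (j : Fin k) : Set.MapsTo (Z j.succ) E E :=
      mapsTo_genEigenspace_of_comm (hZZ 0 j.succ) μ 1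
    have hE : q ^ k ≤ finrank K E := by
      refine ih E (fun j => (X j.succ).restrict (hXE j)) (fun j => (Z j.succ).restrict (hZE j))
        (fun j => LinearMap.injective_restrict_of_injective _ (hX _))
        (fun j => LinearMap.injective_restrict_of_injective _ (hZ _)) (fun j => ?_)
        (fun i j => LinearMap.restrict_commute (hZZ _ _) _ _)
        (fun i j hij => LinearMap.restrict_commute (hXZ _ _ (Fin.succ_injective _ |>.ne hij)) _ _)
      ext v
      exact congr($(hrel j.succ) (v : V))
    calc q ^ (k + 1) = q * q ^ k := pow_succ' q k
      _ ≤ q * finrank K E := Nat.mul_le_mul_left q hE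
      _ ≤ finrank K V := mul_finrank_eigenspace_le_finrank hΩ (hX 0) (hrel 0) hμ0

open Matrix in
theorem weyl_algebra_tensor_dimension_bound_general (k d q : ℕ) (hd : 0 < d)
    (Ω : ℂ) (hΩ : IsPrimitiveRoot Ω q)
    (X Z : Fin k → Matrix (Fin d) (Fin d) ℂ)
    (hX : ∀ j, IsUnit (X j)) (hZ : ∀ j, IsUnit (Z j))
    (hrel : ∀ j, Z j * X j = Ω • (X j * Z j))
    (hZZ : ∀ i j, Commute (Z i) (Z j))
    (hXZ : ∀ i j, i ≠ j → Commute (X i) (Z j)) :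
    q ^ k ≤ d := by
  have : Nonempty (Fin d) := ⟨⟨0, hd⟩⟩
  let φ := Matrix.toLinAlgEquiv' (R := ℂ) (n := Fin d)
  have hinj {A : Matrix (Fin d) (Fin d) ℂ} (hA : IsUnit A) : Injective (φ A) :=
    ((Module.End.isUnit_iff _).mp (hA.map φ)).injective
  simpa using pow_le_finrank_of_weyl_relations hΩ k (Fin d → ℂ) (fun j => φ (X j))
    (fun j => φ (Z j)) (fun j => hinj (hX j)) (fun j => hinj (hZ j))
    (fun j => by rw [← map_mul, hrel, map_smul, map_mul])
    (fun i j => (hZZ i j).map φ) (fun i j hij => (hXZ i j hij).map φ)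

open Matrix in
/-- Tensor product of `k` copies of the `Ω`-Weyl algebra: if invertible `d×d` matrices
`X_j, Z_j` (`1 ≤ j ≤ k`) satisfy `Z_j X_j = Ω X_j Z_j` with `Ω` a primitive `q`-th root of
unity, and all other pairs commute, then `d ≥ q^k`. -/
theorem weyl_algebra_tensor_dimension_bound (k d q : ℕ) (hd : 0 < d) (hq : 1 < q)
    (Ω : ℂ) (hΩ : IsPrimitiveRoot Ω q)
    (X Z : Fin k → Matrix (Fin d) (Fin d) ℂ)
    (hX : ∀ j, IsUnit (X j)) (hZ : ∀ j, IsUnit (Z j))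
    (hrel : ∀ j, Z j * X j = Ω • (X j * Z j))
    (hXX : ∀ i j, Commute (X i) (X j))
    (hZZ : ∀ i j, Commute (Z i) (Z j))
    (hXZ : ∀ i j, i ≠ j → Commute (X i) (Z j)) :
    q ^ k ≤ d :=
  weyl_algebra_tensor_dimension_bound_general k d q hd Ω hΩ X Z hX hZ hrel hZZ hXZ
end

section
/- Consider 2k elements V_1^g, ..., V_{2k}^g and V_1^h, ..., V_{2k}^h of GL(d, ℂ) satisfying V_j^g V_{j+1}^h = Ω^{-1} V_{j+1}^h V_j^g and V_{j+1}^g V_j^h = Ω V_j^h V_{j+1}^g for 1 ≤ j ≤ 2k (indices mod 2k), with all other pairs commuting, where Ω is a primitive q-th root of unity. Then, setting Z_j = V_{2j}^h and X_j = Π_{l=1}^j V_{2l-1}^g for 1 ≤ j ≤ k-1, these satisfy Z_j X_j = Ω X_j Z_j with all other pairs among {X_j, Z_j} commuting; together with the analogous construction on even/odd swapped indices, the full algebra requires representation dimension at least q^{2(k-1)}. -/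
/-!
For each parity `s` and each `j < k - 1`, the string `X_{s,j} = ∏_{l ≤ j} V^g_{2l+s}` and the
single link `Z_{s,j} = V^h_{2j+1+s}` form a family of `2(k-1)` Weyl pairs: the `X`s commute, the
`Z`s commute, and `Z_a X_b = Ω^{δ_{ab}} X_b Z_a`, because along the string the factors `Ω` from
`V^g_{2j+s}` and `Ω⁻¹` from `V^g_{2j+2+s}` cancel unless the string ends at `2j+s`.
For `n` Weyl pairs, conjugation by `Z_a` and by `X_a` scales the ordered monomial `X^e Z^f`
by `Ω^{e_a}` and `Ω^{-f_a}`, so for distinct exponent vectors in `[0, q)^n` some generator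
scales `M M'⁻¹` by a nontrivial root of unity and its trace vanishes. Hence the `q^{2n}` monomials
are linearly independent in `Matrix (Fin d) (Fin d) ℂ`, giving `q^{2n} ≤ d^2`.
-/

open Matrix

section QCommute

variable {R A : Type*} [Monoid R] [Monoid A] [MulAction R A]

def QCommute (μ : R) (S T : A) : Prop := S * T = μ • (T * S)

theorem Commute.qCommute {S T : A} (h : Commute S T) : QCommute (1 : R) S T := by
  rw [QCommute, one_smul, h.eq]

variable [IsScalarTower R A A] [SMulCommClass R A A]

namespace QCommute

variable {μ ν : R} {S T U : A}

theorem mul_right (hT : QCommute μ S T) (hU : QCommute ν S U) :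
    QCommute (μ * ν) S (T * U) := by
  rw [QCommute, ← mul_assoc, hT, smul_mul_assoc, mul_assoc, hU, mul_smul_comm, smul_smul,
    mul_assoc]

theorem pow_right (h : QCommute μ S T) : ∀ m : ℕ, QCommute (μ ^ m) S (T ^ m)
  | 0 => by rw [pow_zero, pow_zero]; exact (Commute.one_right S).qCommute
  | m + 1 => by rw [pow_succ, pow_succ]; exact (h.pow_right m).mul_right h

theorem list_prod_right {ι : Type*} (L : List ι) {μ : ι → R} {T : ι → A}
    (h : ∀ b ∈ L, QCommute (μ b) S (T b)) : QCommute (L.map μ).prod S (L.map T).prod := by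
  induction L with
  | nil => exact (Commute.one_right S).qCommute
  | cons b L ih =>
    simp only [List.map_cons, List.prod_cons]
    exact (h b List.mem_cons_self).mul_right (ih fun c hc => h c (List.mem_cons_of_mem b hc))

end QCommute

end QCommute

namespace QCommute

variable {K A : Type*} [GroupWithZero K] [Monoid A] [MulAction K A] {μ : K} {S T : A}

theorem symm (h : QCommute μ S T) (hμ : μ ≠ 0) : QCommute μ⁻¹ T S := by
  rw [QCommute, h, smul_smul, inv_mul_cancel₀ hμ, one_smul]

theorem units_inv_right [IsScalarTower K A A] [SMulCommClass K A A] {u : Aˣ}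
    (h : QCommute μ S u) (hμ : μ ≠ 0) : QCommute μ⁻¹ S ↑u⁻¹ := by
  refine QCommute.symm ?_ hμ
  calc ↑u⁻¹ * S = ↑u⁻¹ * (S * u) * ↑u⁻¹ := by simp [mul_assoc]
    _ = μ • (S * ↑u⁻¹) := by rw [h, mul_smul_comm, smul_mul_assoc, Units.inv_mul_cancel_left]

end QCommute

section Trace

variable {K n : Type*} [Field K] [Fintype n] [DecidableEq n]

namespace QCommute

variable {μ ν : K} {S T T' : Matrix n n K}

theorem inv_right (h : QCommute μ S T) (hT : IsUnit T) (hμ : μ ≠ 0) : QCommute μ⁻¹ S T⁻¹ := by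
  obtain ⟨u, rfl⟩ := hT
  rw [← coe_units_inv]
  exact h.units_inv_right hμ

theorem trace_eq_zero (h : QCommute μ S T) (hS : IsUnit S) (hμ : μ ≠ 1) : T.trace = 0 := by
  obtain ⟨u, rfl⟩ := hS
  have hconj : (u : Matrix n n K) * T * (↑u⁻¹ : Matrix n n K) = μ • T := by
    rw [h, smul_mul_assoc, Units.mul_inv_cancel_right]
  have : μ * T.trace = T.trace := by rw [← smul_eq_mul, ← trace_smul, ← hconj, trace_units_conj]
  exact (mul_left_eq_self₀.mp this).resolve_left hμ

theorem trace_mul_inv_eq_zero (h : QCommute μ S T) (h' : QCommute ν S T') (hS : IsUnit S)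
    (hT' : IsUnit T') (hν : ν ≠ 0) (hμν : μ ≠ ν) : (T * T'⁻¹).trace = 0 :=
  (h.mul_right (h'.inv_right hT' hν)).trace_eq_zero hS (by rwa [Ne, mul_inv_eq_one₀ hν])

end QCommute

theorem linearIndependent_of_trace_mul_inv_eq_zero [CharZero K] [Nonempty n] {ι : Type*}
    {v : ι → Matrix n n K} (hv : ∀ i, IsUnit (v i))
    (htr : ∀ i j, i ≠ j → (v i * (v j)⁻¹).trace = 0) : LinearIndependent K v := by
  classical
  rw [linearIndependent_iff']
  intro s g hg j hj
  have hdual : ∀ i, g i * (v i * (v j)⁻¹).trace = if i = j then g j * Fintype.card n else 0 := by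
    intro i
    split_ifs with hij
    · subst hij
      rw [mul_nonsing_inv _ ((isUnit_iff_isUnit_det _).mp (hv i)), trace_one]
    · rw [htr i j hij, mul_zero]
  have := congrArg (fun M => (M * (v j)⁻¹).trace) hg
  simp only [Finset.sum_mul, trace_sum, smul_mul_assoc, trace_smul, smul_eq_mul, hdual,
    Finset.sum_ite_eq', if_pos hj, zero_mul, trace_zero] at this
  exact (mul_eq_zero.mp this).resolve_right (Nat.cast_ne_zero.mpr Fintype.card_ne_zero)

end Trace

section WeylPairs

variable {R A ι : Type*} [Fintype ι]

noncomputable def orderedMonomial [Monoid A] (Y W : ι → A) (e f : ι → ℕ) : A :=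
  (Finset.univ.toList.map fun a => Y a ^ e a).prod *
    (Finset.univ.toList.map fun a => W a ^ f a).prod

theorem isUnit_orderedMonomial [Monoid A] {Y W : ι → A} (hY : ∀ a, IsUnit (Y a))
    (hW : ∀ a, IsUnit (W a)) (e f : ι → ℕ) : IsUnit (orderedMonomial Y W e f) := by
  refine .mul (List.prod_isUnit ?_) (List.prod_isUnit ?_)
  · simpa using fun a => (hY a).pow (e a)
  · simpa using fun a => (hW a).pow (f a)

theorem qCommute_orderedMonomial [CommMonoid R] [Monoid A] [MulAction R A]
    [IsScalarTower R A A] [SMulCommClass R A A] {Y W : ι → A} {S : A} {α β : ι → R}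
    (hY : ∀ a, QCommute (α a) S (Y a)) (hW : ∀ a, QCommute (β a) S (W a)) (e f : ι → ℕ) :
    QCommute ((∏ a, α a ^ e a) * ∏ a, β a ^ f a) S (orderedMonomial Y W e f) := by
  rw [← Finset.prod_map_toList, ← Finset.prod_map_toList]
  exact (QCommute.list_prod_right _ fun a _ => (hY a).pow_right (e a)).mul_right
    (QCommute.list_prod_right _ fun a _ => (hW a).pow_right (f a))

theorem pow_card_le_card_of_qCommute {K n : Type*} [Field K] [CharZero K] [Fintype n]
    [DecidableEq n] [Nonempty n] [DecidableEq ι] {q : ℕ} {Ω : K} (hΩ : IsPrimitiveRoot Ω q)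
    {Y W : ι → Matrix n n K} (hY : ∀ a, IsUnit (Y a)) (hW : ∀ a, IsUnit (W a))
    (hYY : ∀ a b, Commute (Y a) (Y b)) (hWW : ∀ a b, Commute (W a) (W b))
    (hWY : ∀ a b, QCommute (if a = b then Ω else 1) (W a) (Y b)) :
    q ^ Fintype.card ι ≤ Fintype.card n := by
  let v : (ι → Fin q) × (ι → Fin q) → Matrix n n K := fun ef =>
    orderedMonomial Y W (fun a => ef.1 a) (fun a => ef.2 a)
  have hv : ∀ ef, IsUnit (v ef) := fun _ => isUnit_orderedMonomial hY hW _ _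
  have hli : LinearIndependent K v := by
    refine linearIndependent_of_trace_mul_inv_eq_zero hv ?_
    rintro ⟨e, f⟩ ⟨e', f'⟩ hne
    by_cases he : e = e'
    · obtain ⟨a, ha⟩ := Function.ne_iff.mp fun hf : f = f' => hne (by rw [he, hf])
      have hΩ0 : Ω ≠ 0 := hΩ.ne_zero (Fin.pos (f a)).ne'
      have hYa : ∀ e f : ι → Fin q, QCommute ((Ω⁻¹) ^ (f a : ℕ)) (Y a) (v (e, f)) := by
        intro e f
        simpa [ite_pow] using qCommute_orderedMonomial (S := Y a) (α := 1)
          (β := fun b => if b = a then Ω⁻¹ else 1) (fun b => (hYY a b).qCommute)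
          (fun b => by simpa [apply_ite] using (hWY b a).symm (by split_ifs <;> simp [hΩ0]))
          (fun b => (e b : ℕ)) (fun b => (f b : ℕ))
      exact (hYa e f).trace_mul_inv_eq_zero (hYa e' f') (hY a) (hv _) (by simp [hΩ0])
        fun h => ha (Fin.ext (hΩ.inv.pow_inj (f a).2 (f' a).2 h))
    · obtain ⟨a, ha⟩ := Function.ne_iff.mp he
      have hΩ0 : Ω ≠ 0 := hΩ.ne_zero (Fin.pos (e a)).ne'
      have hWa : ∀ e f : ι → Fin q, QCommute (Ω ^ (e a : ℕ)) (W a) (v (e, f)) := by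
        intro e f
        simpa [ite_pow] using qCommute_orderedMonomial (S := W a)
          (α := fun b => if a = b then Ω else 1) (β := 1) (hWY a) (fun b => (hWW a b).qCommute)
          (fun b => (e b : ℕ)) (fun b => (f b : ℕ))
      exact (hWa e f).trace_mul_inv_eq_zero (hWa e' f') (hW a) (hv _) (by simp [hΩ0])
        fun h => ha (Fin.ext (hΩ.pow_inj (e a).2 (e' a).2 h))
  have hcard := hli.fintype_card_le_finrank
  simp only [Fintype.card_prod, Fintype.card_fun, Fintype.card_fin, Module.finrank_matrix,
    Module.finrank_self, mul_one] at hcard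
  exact Nat.mul_self_le_mul_self_iff.mp hcard

end WeylPairs

theorem prod_range_ite_ite_inv {K : Type*} [CommGroupWithZero K] {μ : K} (hμ : μ ≠ 0)
    (j m : ℕ) :
    ∏ l ∈ Finset.range (m + 1), (if l = j then μ else if l = j + 1 then μ⁻¹ else 1) =
      if j = m then μ else 1 := by
  induction m with
  | zero => simp [eq_comm]
  | succ m ih =>
    rw [Finset.prod_range_succ, ih]
    by_cases hjm : j = m
    · simp [hjm, hμ]
    · by_cases hjm' : j = m + 1
      · subst hjm'
        simp
      · rw [if_neg hjm, if_neg (Ne.symm hjm'), if_neg (by omega), if_neg hjm', one_mul]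

open Fin.NatCast

theorem Fin.natCast_eq_natCast_add_one_iff {N m m' : ℕ} [NeZero N] (hm : m < N)
    (hm' : m' + 1 < N) : (m : Fin N) = (m' : Fin N) + 1 ↔ m = m' + 1 := by
  rw [← Nat.cast_succ, Fin.ext_iff, Fin.val_natCast, Fin.val_natCast, Nat.mod_eq_of_lt hm,
    Nat.mod_eq_of_lt hm']

section Cycle

variable {K A : Type*} [Field K] [Monoid A] [MulAction K A] {N : ℕ} [NeZero N] {Ω : K}
  {Vg Vh : Fin N → A}

structure CycleRelations (Ω : K) (Vg Vh : Fin N → A) : Prop where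
  g_mul_h_succ : ∀ j, Vg j * Vh (j + 1) = Ω⁻¹ • (Vh (j + 1) * Vg j)
  g_succ_mul_h : ∀ j, Vg (j + 1) * Vh j = Ω • (Vh j * Vg (j + 1))
  commute : ∀ i j, j ≠ i + 1 → i ≠ j + 1 → Commute (Vg i) (Vh j)

-- The paper's `X_j` (`1 ≤ j ≤ k - 1`, 1-indexed) is `cycleX Vg 0 (j - 1)`, and its `Z_j` is
-- `Vh (2 * (j - 1) + 1)`; parity `s = 1` is the even/odd swapped construction.
variable (Vg) in
noncomputable def cycleX (s j : ℕ) : A :=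
  (List.ofFn fun l : Fin (j + 1) => Vg (2 * l + s : ℕ)).prod

theorem isUnit_cycleX (hVg : ∀ i, IsUnit (Vg i)) (s j : ℕ) : IsUnit (cycleX Vg s j) :=
  List.prod_isUnit <| by simp [hVg]

theorem commute_cycleX (hgg : ∀ i j, Commute (Vg i) (Vg j)) (s j s' j' : ℕ) :
    Commute (cycleX Vg s j) (cycleX Vg s' j') :=
  .list_prod_left _ _ fun _ hx => .list_prod_right _ _ fun _ hy => by
    obtain ⟨l, rfl⟩ := List.mem_ofFn.mp hx
    obtain ⟨l', rfl⟩ := List.mem_ofFn.mp hy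
    exact hgg _ _

theorem cycleX_zero (j : ℕ) (hj : 2 * j < N) :
    cycleX Vg 0 j = (List.ofFn fun l : Fin (j + 1) => Vg ⟨2 * l, by omega⟩).prod := by
  simp only [cycleX, add_zero]
  congr 2
  funext l
  exact congrArg Vg (Fin.ext (by rw [Fin.val_natCast, Nat.mod_eq_of_lt (by omega)]))

namespace CycleRelations

variable (hV : CycleRelations Ω Vg Vh) (hΩ : Ω ≠ 0)
include hV hΩ

theorem qCommute (i i' : Fin N) :
    QCommute (if i = i' + 1 then Ω else if i' = i + 1 then Ω⁻¹ else 1) (Vh i) (Vg i') := by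
  split_ifs with h h'
  · subst h
    simpa using QCommute.symm (hV.g_mul_h_succ i') (inv_ne_zero hΩ)
  · subst h'
    exact QCommute.symm (hV.g_succ_mul_h i) hΩ
  · exact (hV.commute i' i h h').symm.qCommute

theorem qCommute_natCast {m m' : ℕ} (hm : m + 1 < N) (hm' : m' + 1 < N) :
    QCommute (if m = m' + 1 then Ω else if m' = m + 1 then Ω⁻¹ else 1) (Vh m) (Vg m') := by
  simpa only [Fin.natCast_eq_natCast_add_one_iff (by omega : m < N) hm',
    Fin.natCast_eq_natCast_add_one_iff (by omega : m' < N) hm] using hV.qCommute hΩ m m'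

theorem qCommute_cycleX [IsScalarTower K A A] [SMulCommClass K A A] {s s' j j' : ℕ}
    (hs : s < 2) (hs' : s' < 2) (hj : 2 * j + s + 2 < N) (hj' : 2 * j' + s' + 1 < N) :
    QCommute (if s = s' ∧ j = j' then Ω else 1) (Vh (2 * j + 1 + s : ℕ)) (cycleX Vg s' j') := by
  have hfactor : ∀ l : Fin (j' + 1), QCommute
      (if s = s' then (if (l : ℕ) = j then Ω else if (l : ℕ) = j + 1 then Ω⁻¹ else 1) else 1)
      (Vh (2 * j + 1 + s : ℕ)) (Vg (2 * l + s' : ℕ)) := by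
    intro l
    have hl := l.2
    convert hV.qCommute_natCast hΩ (m := 2 * j + 1 + s) (m' := 2 * l + s') (by omega) (by omega)
      using 1
    split_ifs <;> first | rfl | omega
  have h := QCommute.list_prod_right (List.finRange (j' + 1)) fun l _ => hfactor l
  rw [← List.ofFn_eq_map, ← List.ofFn_eq_map, List.prod_ofFn] at h
  rw [cycleX]
  convert h using 1
  by_cases hss : s = s'
  · simp only [hss, true_and, if_true]
    rw [Fin.prod_univ_eq_prod_range (fun l => if l = j then Ω else if l = j + 1 then Ω⁻¹ else 1),
      prod_range_ite_ite_inv hΩ]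
  · simp [hss]

end CycleRelations

end Cycle

open Matrix in
/-- The algebra arising in the transfer matrix `𝒯̃_{2α}` of the partial transpose: `2k`
pairs `V_j^g, V_j^h` of invertible `d×d` matrices around a cycle satisfy
`V_j^g V_{j+1}^h = Ω⁻¹ V_{j+1}^h V_j^g` and `V_{j+1}^g V_j^h = Ω V_j^h V_{j+1}^g`
(indices mod `2k`), all other pairs commuting, with `Ω` a primitive `q`-th root of unity.
Then `Z_j = V_{2j}^h` and `X_j = Π_{l=1}^j V_{2l-1}^g` (for `1 ≤ j ≤ k-1`) satisfy
`Z_j X_j = Ω X_j Z_j`, and the representation dimension satisfies `d ≥ q^{2(k-1)}`. -/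
theorem partial_transpose_algebra_dimension_bound (k d q : ℕ) (hd : 0 < d)
    (hq : 1 < q) (Ω : ℂ) (hΩ : IsPrimitiveRoot Ω q) [NeZero (2 * k)]
    (Vg Vh : Fin (2 * k) → Matrix (Fin d) (Fin d) ℂ)
    (hVg : ∀ j, IsUnit (Vg j)) (hVh : ∀ j, IsUnit (Vh j))
    (h1 : ∀ j, Vg j * Vh (j + 1) = Ω⁻¹ • (Vh (j + 1) * Vg j))
    (h2 : ∀ j, Vg (j + 1) * Vh j = Ω • (Vh j * Vg (j + 1)))
    (hgg : ∀ i j, Commute (Vg i) (Vg j))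
    (hhh : ∀ i j, Commute (Vh i) (Vh j))
    (hgh : ∀ i j : Fin (2 * k), j ≠ i + 1 → i ≠ j + 1 → Commute (Vg i) (Vh j)) :
    (∀ j : Fin k, (j : ℕ) + 1 ≤ k - 1 →
      let Zj := Vh ⟨2 * (j : ℕ) + 1, by have := j.2; omega⟩
      let Xj := (List.ofFn (fun l : Fin ((j : ℕ) + 1) =>
        Vg ⟨2 * (l : ℕ), by have := l.2; have := j.2; omega⟩)).prod
      Zj * Xj = Ω • (Xj * Zj)) ∧
    q ^ (2 * (k - 1)) ≤ d := by
  have hV : CycleRelations Ω Vg Vh := ⟨h1, h2, hgh⟩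
  have hZX : ∀ a b : Fin 2 × Fin (k - 1), QCommute (if a = b then Ω else 1)
      (Vh (2 * a.2 + 1 + a.1 : ℕ)) (cycleX Vg b.1 b.2) := by
    rintro ⟨s, j⟩ ⟨s', j'⟩
    simpa [Prod.ext_iff, Fin.ext_iff] using
      hV.qCommute_cycleX (hΩ.ne_zero (by omega)) s.2 s'.2 (by omega) (by omega)
  refine ⟨fun j hj => ?_, ?_⟩
  · have key := hZX (0, ⟨j, by omega⟩) (0, ⟨j, by omega⟩)
    have hZ : ((2 * j + 1 + 0 : ℕ) : Fin (2 * k)) = ⟨2 * j + 1, by omega⟩ :=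
      Fin.ext (by rw [Fin.val_natCast, Nat.mod_eq_of_lt (by omega)])
    rw [if_pos rfl] at key
    simp only [Fin.val_zero] at key
    rwa [hZ, cycleX_zero _ (by omega)] at key
  · have : Nonempty (Fin d) := Fin.pos_iff_nonempty.mp hd
    have h := pow_card_le_card_of_qCommute hΩ
      (Y := fun a : Fin 2 × Fin (k - 1) => cycleX Vg a.1 a.2)
      (W := fun a => Vh (2 * a.2 + 1 + a.1 : ℕ)) (fun a => isUnit_cycleX hVg a.1 a.2)
      (fun a => hVh _) (fun a b => commute_cycleX hgg _ _ _ _) (fun a b => hhh _ _) hZX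
    rwa [Fintype.card_prod, Fintype.card_fin, Fintype.card_fin, Fintype.card_fin] at h
end
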